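/- If T is a Fishburn tree with maximum label k, then treetops(T) has exactly k elements and the set of labels of nodes in treetops(T) equals [k]. -/

import Mathlib

inductive LTree where
  | nil : LTree
  | node : LTree → ℕ → LTree → LTree
deriving DecidableEq

namespace LTree

def size : LTree → ℕ
  | nil => 0
  | node L _ R => L.size + 1 + R.size

/-- The in-order sequence of labels. -/
def inorder : LTree → List ℕ
  | nil => []
  | node L r R => L.inorder ++ r :: R.inorder

/-- The maximum label (0 for the empty tree). -/
def maxL : LTree → ℕ
  | nil => 0
  | node L r R => max r (max L.maxL R.maxL)

/-- Weakly decreasing along every root-to-leaf path. -/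
def Decreasing : LTree → Prop
  | nil => True
  | node L r R => L.maxL ≤ r ∧ R.maxL ≤ r ∧ L.Decreasing ∧ R.Decreasing

/-- Strictly decreasing to the left: every label in a left subtree
is strictly smaller than the label of its parent. -/
def StrictLeft : LTree → Prop
  | nil => True
  | node L r R => L.maxL < r ∧ L.StrictLeft ∧ R.StrictLeft

/-- An endotree: decreasing, strictly decreasing to the left, labels in `[n]`. -/
def IsEndotree (T : LTree) : Prop :=
  T.Decreasing ∧ T.StrictLeft ∧ ∀ l ∈ T.inorder, 1 ≤ l ∧ l ≤ T.size

/-- A regular endotree: the set of labels equals `[k]` for some `k ≤ n`. -/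
def IsRegularEndotree (T : LTree) : Prop :=
  T.IsEndotree ∧ ∃ k ≤ T.size, ∀ l, l ∈ T.inorder ↔ (1 ≤ l ∧ l ≤ k)

end LTree

/-- An endofunction on `[n]`, identified with a word of length `n` over `[n]`. -/
def IsEndofun (x : List ℕ) : Prop := ∀ a ∈ x, 1 ≤ a ∧ a ≤ x.length

/-- A Cayley permutation: an endofunction whose image is `[k]` for some `k ≤ n`. -/
def IsCayley (x : List ℕ) : Prop :=
  IsEndofun x ∧ ∃ k ≤ x.length, ∀ j, j ∈ x ↔ (1 ≤ j ∧ j ≤ k)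

namespace LTree

/-- The list of (subtrees rooted at the) nodes of `T`, in in-order. -/
def nodes : LTree → List LTree
  | nil => []
  | node L r R => L.nodes ++ node L r R :: R.nodes

/-- Root label (0 for the empty tree). -/
def rootLabel : LTree → ℕ
  | nil => 0
  | node _ r _ => r

/-- Left subtree. -/
def leftT : LTree → LTree
  | nil => nil
  | node L _ _ => L

/-- Indices `i` (0-based) such that the `i`-th in-order node `v_{i+1}` is in
`treetops(T)`: either the first node or a node with nonempty left subtree. -/
def treetopsIdx (T : LTree) : Set ℕ :=
  {i | i < T.size ∧ (i = 0 ∨ (T.nodes.getD i nil).leftT ≠ nil)}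

/-- Indices `i` such that the label of the `i`-th in-order node does not occur
at any earlier in-order node. -/
def unseenIdx (T : LTree) : Set ℕ :=
  {i | i < T.size ∧
    ∀ j < i, (T.nodes.getD j nil).rootLabel ≠ (T.nodes.getD i nil).rootLabel}

/-- A Fishburn tree: a regular endotree with `treetops(T) = unseen(T)`. -/
def IsFishburnTree (T : LTree) : Prop :=
  T.IsRegularEndotree ∧ treetopsIdx T = unseenIdx T

end LTree

/-!
Treetops are the unseen nodes, i.e. the positions of first occurrences in the in-order word of
labels. These are exactly the positions `idxOf l` for `l` a label, and reading the label at
`idxOf l` gives back `l`, so `idxOf` is a bijection from the label set `[k]` onto treetops.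
-/

namespace List

variable {α : Type*} [DecidableEq α]

theorem getElem_ne_of_lt_idxOf {x : List α} {a : α} {j : ℕ} (hj : j < x.idxOf a)
    (hjx : j < x.length) : x[j] ≠ a := by
  simpa using not_of_lt_findIdx hj

theorem leftInvOn_getD_idxOf (x : List α) (d : α) :
    Set.LeftInvOn (x.getD · d) x.idxOf {a | a ∈ x} := fun a ha => by
  simp only [getD_eq_getElem x d (idxOf_lt_length_iff.2 ha), getElem_idxOf]

theorem setOf_forall_getD_ne_eq_image_idxOf (x : List α) (d : α) :
    {i | i < x.length ∧ ∀ j < i, x.getD j d ≠ x.getD i d} = x.idxOf '' {a | a ∈ x} := by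
  ext i
  constructor
  · rintro ⟨hi, hfirst⟩
    have hmem : x[i] ∈ x := getElem_mem hi
    have hlt : x.idxOf x[i] < x.length := idxOf_lt_length_iff.2 hmem
    refine ⟨x[i], hmem, le_antisymm ?_ ?_⟩
    · by_contra! hgt
      exact getElem_ne_of_lt_idxOf hgt hi rfl
    · by_contra! hlt'
      have := hfirst _ hlt'
      rw [getD_eq_getElem x d hlt, getD_eq_getElem x d hi, getElem_idxOf] at this
      exact this rfl
  · rintro ⟨a, ha, rfl⟩
    have hlt : x.idxOf a < x.length := idxOf_lt_length_iff.2 ha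
    refine ⟨hlt, fun j hj => ?_⟩
    rw [getD_eq_getElem x d (hj.trans hlt), show x.getD (x.idxOf a) d = a from
      leftInvOn_getD_idxOf x d ha]
    exact getElem_ne_of_lt_idxOf hj _

end List

namespace LTree

theorem nodes_length (T : LTree) : T.nodes.length = T.size := by
  induction T with
  | nil => rfl
  | node L r R ihL ihR =>
    simp only [nodes, size, List.length_append, List.length_cons, ihL, ihR]
    omega

theorem inorder_eq_map_rootLabel (T : LTree) : T.inorder = T.nodes.map rootLabel := by
  induction T with
  | nil => rfl
  | node L r R ihL ihR => simp [inorder, nodes, rootLabel, ihL, ihR]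

theorem rootLabel_getD_nodes (T : LTree) (i : ℕ) :
    (T.nodes.getD i nil).rootLabel = T.inorder.getD i 0 := by
  rw [inorder_eq_map_rootLabel]
  exact (List.getD_map T.nodes nil rootLabel).symm

theorem unseenIdx_eq_image_idxOf (T : LTree) :
    T.unseenIdx = T.inorder.idxOf '' {l | l ∈ T.inorder} := by
  rw [← List.setOf_forall_getD_ne_eq_image_idxOf _ 0, inorder_eq_map_rootLabel, List.length_map,
    nodes_length, ← inorder_eq_map_rootLabel]
  simp only [unseenIdx, rootLabel_getD_nodes]

theorem maxL_le_iff (T : LTree) (m : ℕ) : T.maxL ≤ m ↔ ∀ l ∈ T.inorder, l ≤ m := by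
  induction T with
  | nil => simp [maxL, inorder]
  | node L r R ihL ihR =>
    simp only [maxL, inorder, max_le_iff, ihL, ihR, List.mem_append, List.mem_cons]
    grind

theorem maxL_eq_of_mem_inorder_iff (T : LTree) {k : ℕ}
    (hk : ∀ l, l ∈ T.inorder ↔ 1 ≤ l ∧ l ≤ k) : T.maxL = k := by
  refine le_antisymm ((maxL_le_iff T k).2 fun l hl => ((hk l).1 hl).2) ?_
  rcases Nat.eq_zero_or_pos k with rfl | hpos
  · exact Nat.zero_le _
  · exact (maxL_le_iff T T.maxL).1 le_rfl k ((hk k).2 ⟨hpos, le_rfl⟩)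

end LTree

/-- if `T` is a Fishburn tree with maximum label `k`, then
`treetops(T)` has exactly `k` elements and its set of labels is `[k]`. -/
theorem fishburn_treetops_labels (T : LTree) (h : T.IsFishburnTree) :
    (T.treetopsIdx).ncard = T.maxL ∧
      {l : ℕ | ∃ i ∈ T.treetopsIdx, T.inorder.getD i 0 = l} = Set.Icc 1 T.maxL := by
  obtain ⟨⟨-, k, -, hk⟩, htops⟩ := h
  have hlabels : {l | l ∈ T.inorder} = Set.Icc 1 k := Set.ext hk
  have hinv : Set.LeftInvOn (T.inorder.getD · 0) T.inorder.idxOf (Set.Icc 1 k) :=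
    hlabels ▸ List.leftInvOn_getD_idxOf T.inorder 0
  rw [LTree.maxL_eq_of_mem_inorder_iff T hk, htops, LTree.unseenIdx_eq_image_idxOf, hlabels]
  refine ⟨?_, hinv.image_image⟩
  rw [hinv.injOn.ncard_image, Set.ncard_Icc_nat, Nat.add_sub_cancel]
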